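/- ict(Alt(4), Alt(3)) = 7: the conjugation action of the point stabilizer Sym(3) ≤ Sym(4) on the 3^3 = 27 left transversals (with identity) of Alt(3) in Alt(4) has exactly 7 orbits, and these orbits are exactly the isomorphism classes of transversals. -/

import Mathlib

/-- A left transversal (with identity) of the subgroup `H` inside the subgroup `K`:
`S ⊆ K`, `1 ∈ S`, and `S` contains exactly one representative of each left coset
of `H` inside `K`. -/
def IsLeftTransversalIn {P : Type*} [Group P] (K H : Subgroup P) (S : Set P) : Prop :=
  (1 : P) ∈ S ∧ S ⊆ (K : Set P) ∧ ∀ g ∈ K, ∃! s, s ∈ S ∧ s⁻¹ * g ∈ H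

/-- `σ` is an isomorphism of the induced left loop structures on left transversals
`T`, `L` of `H`. -/
def IsLeftIso {P : Type*} [Group P] (H : Subgroup P) (T L : Set P) (σ : P → P) : Prop :=
  Set.BijOn σ T L ∧ ∀ x ∈ T, ∀ y ∈ T, ∀ z ∈ T,
    z⁻¹ * (x * y) ∈ H → (σ z)⁻¹ * (σ x * σ y) ∈ H

/-!
A left transversal `T` of `H = Alt(4) ∩ Stab(0)` in `Alt(4)` consists of one `t_i` with
`t_i 0 = i` for each point `i`, and its loop operation becomes `i ⋅ j = t_i j` on the points.
A loop isomorphism `σ : T → L` therefore induces the permutation `π i = σ(t_i) 0`, which fixes `0`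
and satisfies `π (t_i j) = l_{π i} (π j)`, i.e. `π t_i π⁻¹ = l_{π i}`; conversely conjugation by a
permutation fixing `0` is a loop isomorphism. So isomorphism classes are the orbits of `Sym(3)` on
the 27 transversals, and a finite computation finds 7 of them.
-/

open Equiv MulAction

variable {α : Type*} {K : Subgroup (Perm α)} {a : α}

namespace Equiv.Perm

lemma mem_inf_stabilizer_iff {h : Perm α} :
    h ∈ K ⊓ stabilizer (Perm α) a ↔ h ∈ K ∧ h a = a := by
  rw [Subgroup.mem_inf, mem_stabilizer_iff, Perm.smul_def]

lemma inv_mul_mem_inf_stabilizer_iff {x y : Perm α} (hx : x ∈ K) (hy : y ∈ K) :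
    x⁻¹ * y ∈ K ⊓ stabilizer (Perm α) a ↔ x a = y a := by
  rw [mem_inf_stabilizer_iff, and_iff_right (K.mul_mem (K.inv_mem hx) hy), mul_apply,
    inv_eq_iff_eq, eq_comm]

end Equiv.Perm

open Equiv.Perm

/-- The left cosets of `K ⊓ stabilizer a` in `K` are the fibres `{g ∈ K | g a = i}`; a coset
section picks one element `s i` from each, with `s a = 1`. -/
def IsCosetSection (K : Subgroup (Perm α)) (a : α) (s : α → Perm α) : Prop :=
  s a = 1 ∧ ∀ i, s i ∈ K ∧ s i a = i

def SectionConj (a : α) (s s' : α → Perm α) : Prop :=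
  ∃ π : Perm α, π a = a ∧ ∀ i, π * s i * π⁻¹ = s' (π i)

instance [Fintype α] [DecidableEq α] : DecidableRel (SectionConj a) := fun s s' => by
  unfold SectionConj
  infer_instance

lemma sectionConj_equivalence : Equivalence (SectionConj a) where
  refl s := ⟨1, rfl, fun i => by simp⟩
  symm := by
    rintro s s' ⟨π, hπa, hπ⟩
    refine ⟨π⁻¹, inv_eq_iff_eq.2 hπa.symm, fun i => ?_⟩
    have h := hπ (π⁻¹ i)
    rw [show π (π⁻¹ i) = i by simp] at h
    rw [← h]
    group
  trans := by
    rintro s s' s'' ⟨π, hπa, hπ⟩ ⟨ρ, hρa, hρ⟩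
    refine ⟨ρ * π, by simp [hπa, hρa], fun i => ?_⟩
    rw [mul_apply, ← hρ, ← hπ]
    group

variable {T L : Set (Perm α)} {s s' : α → Perm α}

namespace IsLeftTransversalIn

lemma eq_of_apply_eq (hT : IsLeftTransversalIn K (K ⊓ stabilizer (Perm α) a) T)
    {t t' : Perm α} (ht : t ∈ T) (ht' : t' ∈ T) (h : t a = t' a) : t = t' := by
  obtain ⟨-, hTK, huniq⟩ := hT
  have hcoset := fun u (hu : u ∈ T) => inv_mul_mem_inf_stabilizer_iff (a := a) (hTK hu) (hTK ht')
  exact (huniq t' (hTK ht')).unique ⟨ht, (hcoset t ht).2 h⟩ ⟨ht', (hcoset t' ht').2 rfl⟩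

lemma exists_mem_apply_eq [IsPretransitive K α]
    (hT : IsLeftTransversalIn K (K ⊓ stabilizer (Perm α) a) T) (i : α) : ∃ t ∈ T, t a = i := by
  obtain ⟨g, rfl⟩ := exists_smul_eq K a i
  obtain ⟨t, ⟨htT, htg⟩, -⟩ := hT.2.2 g g.2
  exact ⟨t, htT, (inv_mul_mem_inf_stabilizer_iff (hT.2.1 htT) g.2).1 htg⟩

lemma exists_isCosetSection [IsPretransitive K α]
    (hT : IsLeftTransversalIn K (K ⊓ stabilizer (Perm α) a) T) :
    ∃ s, IsCosetSection K a s ∧ T = Set.range s := by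
  choose s hsT hsa using hT.exists_mem_apply_eq
  refine ⟨s, ⟨hT.eq_of_apply_eq (hsT a) hT.1 (hsa a), fun i => ⟨hT.2.1 (hsT i), hsa i⟩⟩, ?_⟩
  ext t
  exact ⟨fun ht => ⟨t a, hT.eq_of_apply_eq (hsT _) ht (hsa _)⟩, by rintro ⟨i, rfl⟩; exact hsT i⟩

end IsLeftTransversalIn

namespace IsCosetSection

lemma isLeftTransversalIn_range (hs : IsCosetSection K a s) :
    IsLeftTransversalIn K (K ⊓ stabilizer (Perm α) a) (Set.range s) := by
  refine ⟨⟨a, hs.1⟩, ?_, fun g hg => ⟨s (g a), ⟨⟨_, rfl⟩, ?_⟩, ?_⟩⟩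
  · rintro _ ⟨i, rfl⟩
    exact (hs.2 i).1
  · rw [inv_mul_mem_inf_stabilizer_iff (hs.2 _).1 hg, (hs.2 _).2]
  · rintro _ ⟨⟨i, rfl⟩, hi⟩
    rw [inv_mul_mem_inf_stabilizer_iff (hs.2 _).1 hg, (hs.2 _).2] at hi
    rw [hi]

lemma eq_apply_of_mem_range (hs : IsCosetSection K a s) {t : Perm α} (ht : t ∈ Set.range s) :
    t = s (t a) := by
  obtain ⟨i, rfl⟩ := ht
  rw [(hs.2 i).2]

lemma injective (hs : IsCosetSection K a s) : Function.Injective s := fun i j h => by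
  simpa only [(hs.2 _).2] using congrArg (· a) h

lemma range_injective (hs : IsCosetSection K a s) (hs' : IsCosetSection K a s')
    (h : Set.range s = Set.range s') : s = s' := by
  funext i
  have hi : s i ∈ Set.range s' := h ▸ ⟨i, rfl⟩
  rw [hs'.eq_apply_of_mem_range hi, (hs.2 i).2]

noncomputable def equivLeftTransversal [IsPretransitive K α] :
    {s // IsCosetSection K a s} ≃ {T // IsLeftTransversalIn K (K ⊓ stabilizer (Perm α) a) T} :=
  Equiv.ofBijective (fun s => ⟨Set.range s.1, s.2.isLeftTransversalIn_range⟩)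
    ⟨fun s s' h => Subtype.ext (s.2.range_injective s'.2 (congrArg Subtype.val h)),
      fun ⟨T, hT⟩ => by
        obtain ⟨s, hs, rfl⟩ := hT.exists_isCosetSection
        exact ⟨⟨s, hs⟩, rfl⟩⟩

lemma conj_image_range_eq_iff (hs : IsCosetSection K a s) (hs' : IsCosetSection K a s')
    {π : Perm α} (hπ : π a = a) :
    (fun g => π * g * π⁻¹) '' Set.range s = Set.range s' ↔ ∀ i, π * s i * π⁻¹ = s' (π i) := by
  constructor
  · intro h i
    have hi : π * s i * π⁻¹ ∈ Set.range s' := h ▸ Set.mem_image_of_mem _ ⟨i, rfl⟩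
    replace hi := hs'.eq_apply_of_mem_range hi
    rwa [mul_apply, mul_apply, inv_eq_iff_eq.2 hπ.symm, (hs.2 i).2] at hi
  · intro h
    rw [← Set.range_comp, ← π.surjective.range_comp s']
    exact congrArg Set.range (funext h)

end IsCosetSection

lemma isLeftIso_conj (hL : L ⊆ K) {π : Perm α} (hπ : π a = a)
    (hTL : (fun g => π * g * π⁻¹) '' T = L) :
    IsLeftIso (K ⊓ stabilizer (Perm α) a) T L (fun g => π * g * π⁻¹) := by
  have hmaps : ∀ w ∈ T, π * w * π⁻¹ ∈ L := fun w hw => hTL ▸ Set.mem_image_of_mem _ hw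
  refine ⟨⟨hmaps, fun x _ y _ h => by simpa using h, hTL ▸ Set.surjOn_image _ _⟩,
    fun x hx y hy z hz hxyz => ?_⟩
  rw [mem_inf_stabilizer_iff] at hxyz ⊢
  have hK : ∀ w ∈ T, π * w * π⁻¹ ∈ K := fun w hw => hL (hmaps w hw)
  refine ⟨K.mul_mem (K.inv_mem (hK z hz)) (K.mul_mem (hK x hx) (hK y hy)), ?_⟩
  have hconj : (π * z * π⁻¹)⁻¹ * (π * x * π⁻¹ * (π * y * π⁻¹)) =
      π * (z⁻¹ * (x * y)) * π⁻¹ := by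
    group
  rw [hconj, mul_apply, mul_apply, inv_eq_iff_eq.2 hπ.symm, hxyz.2, hπ]

namespace IsLeftIso

variable {σ : Perm α → Perm α}

lemma apply_section_apply_apply (hs : IsCosetSection K a s)
    (hσ : IsLeftIso (K ⊓ stabilizer (Perm α) a) (Set.range s) L σ) (i j : α) :
    σ (s (s i j)) a = σ (s i) (σ (s j) a) := by
  have hprod : (s (s i j))⁻¹ * (s i * s j) ∈ K ⊓ stabilizer (Perm α) a := by
    rw [inv_mul_mem_inf_stabilizer_iff (hs.2 _).1 (K.mul_mem (hs.2 i).1 (hs.2 j).1), mul_apply,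
      (hs.2 _).2, (hs.2 j).2]
  have := hσ.2 _ ⟨i, rfl⟩ _ ⟨j, rfl⟩ _ ⟨_, rfl⟩ hprod
  rw [mem_inf_stabilizer_iff, mul_apply, mul_apply, inv_eq_iff_eq] at this
  exact this.2.symm

/-- The permutation is `i ↦ σ (s i) a`. -/
lemma exists_perm_apply_section (hs : IsCosetSection K a s) (hs' : IsCosetSection K a s')
    (hσ : IsLeftIso (K ⊓ stabilizer (Perm α) a) (Set.range s) (Set.range s') σ) :
    ∃ π : Perm α, ∀ i j, π (s i j) = s' (π i) (π j) := by
  set f : α → α := fun i => σ (s i) a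
  have hσs : ∀ i, σ (s i) = s' (f i) := fun i =>
    hs'.eq_apply_of_mem_range (hσ.1.mapsTo ⟨i, rfl⟩)
  have hf : ∀ i j, f (s i j) = s' (f i) (f j) := fun i j => by
    rw [← hσs i]
    exact hσ.apply_section_apply_apply hs i j
  have hinj : f.Injective := fun i j h =>
    hs.injective (hσ.1.injOn ⟨i, rfl⟩ ⟨j, rfl⟩ (by rw [hσs, hσs, h]))
  have hsurj : f.Surjective := fun k => by
    obtain ⟨_, ⟨i, rfl⟩, hi⟩ := hσ.1.surjOn ⟨k, rfl⟩
    exact ⟨i, hs'.injective (by rw [← hσs, hi])⟩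
  exact ⟨Equiv.ofBijective f ⟨hinj, hsurj⟩, hf⟩

end IsLeftIso

lemma sectionConj_of_apply_section (hs : IsCosetSection K a s) (hs' : IsCosetSection K a s')
    {π : Perm α} (hπ : ∀ i j, π (s i j) = s' (π i) (π j)) : SectionConj a s s' := by
  have hπa : π a = a := by
    simpa [(hs.2 _).2, hs'.1] using (hπ (π⁻¹ a) a).symm
  refine ⟨π, hπa, fun i => Equiv.ext fun j => ?_⟩
  simpa using hπ i (π⁻¹ j)

lemma IsCosetSection.sectionConj_iff_isLeftIso (hs : IsCosetSection K a s)
    (hs' : IsCosetSection K a s') :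
    SectionConj a s s' ↔
      ∃ σ, IsLeftIso (K ⊓ stabilizer (Perm α) a) (Set.range s) (Set.range s') σ := by
  refine ⟨fun ⟨π, hπa, hπ⟩ => ⟨_, isLeftIso_conj hs'.isLeftTransversalIn_range.2.1 hπa
    ((hs.conj_image_range_eq_iff hs' hπa).2 hπ)⟩, fun ⟨σ, hσ⟩ => ?_⟩
  obtain ⟨π, hπ⟩ := hσ.exists_perm_apply_section hs hs'
  exact sectionConj_of_apply_section hs hs' hπ

lemma isLeftIso_iff_exists_conj [IsPretransitive K α]
    (hT : IsLeftTransversalIn K (K ⊓ stabilizer (Perm α) a) T)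
    (hL : IsLeftTransversalIn K (K ⊓ stabilizer (Perm α) a) L) :
    (∃ σ, IsLeftIso (K ⊓ stabilizer (Perm α) a) T L σ) ↔
      ∃ π : Perm α, π a = a ∧ (fun g => π * g * π⁻¹) '' T = L := by
  obtain ⟨s, hs, rfl⟩ := hT.exists_isCosetSection
  obtain ⟨s', hs', rfl⟩ := hL.exists_isCosetSection
  rw [← hs.sectionConj_iff_isLeftIso hs']
  exact exists_congr fun π => and_congr_right fun hπa => (hs.conj_image_range_eq_iff hs' hπa).symm

instance [Fintype α] [DecidableEq α] : DecidablePred (· ∈ alternatingGroup α) :=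
  sign.decidableMemKer

abbrev Alt3Coset (i : Fin 4) := {g : Perm (Fin 4) // g ∈ alternatingGroup (Fin 4) ∧ g 0 = i}

/-- The `3 ^ 3 = 27` coset sections of `Alt(3)` in `Alt(4)`, encoded as a product of three
three-element types so that `decide` can enumerate them. -/
abbrev Alt4Section := Alt3Coset 1 × Alt3Coset 2 × Alt3Coset 3

namespace Alt4Section

def toFun (c : Alt4Section) : Fin 4 → Perm (Fin 4) := ![1, c.1, c.2.1, c.2.2]

lemma isCosetSection (c : Alt4Section) : IsCosetSection (alternatingGroup (Fin 4)) 0 c.toFun :=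
  ⟨rfl, fun i => by
    fin_cases i
    exacts [⟨one_mem _, rfl⟩, c.1.2, c.2.1.2, c.2.2.2]⟩

def equivCosetSection : Alt4Section ≃ {s // IsCosetSection (alternatingGroup (Fin 4)) 0 s} where
  toFun c := ⟨c.toFun, c.isCosetSection⟩
  invFun s := (⟨s.1 1, s.2.2 1⟩, ⟨s.1 2, s.2.2 2⟩, ⟨s.1 3, s.2.2 3⟩)
  left_inv _ := rfl
  right_inv s := Subtype.ext <| funext fun i => by
    fin_cases i
    exacts [s.2.1.symm, rfl, rfl, rfl]

instance conjSetoid : Setoid Alt4Section :=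
  ⟨Function.onFun (SectionConj 0) toFun, sectionConj_equivalence.comap toFun⟩

instance : DecidableRel ((· ≈ ·) : Alt4Section → Alt4Section → Prop) := fun c d =>
  inferInstanceAs (Decidable (SectionConj 0 c.toFun d.toFun))

lemma card_quotient_conjSetoid : Nat.card (Quotient conjSetoid) = 7 := by
  rw [Nat.card_eq_fintype_card]
  decide

end Alt4Section

/-- `ict(Alt(4), Alt(3)) = 7`: there are exactly 7 isomorphism classes of left
transversals of `Alt(3)` (the stabilizer of `1` in `Alt(4)`) in `Alt(4)`, and two
transversals are isomorphic iff they are conjugate by a permutation fixing `1`. -/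
theorem ict_alt4_alt3 :
    Nat.card (Quot fun (T L : {S : Set (Equiv.Perm (Fin 4)) //
        IsLeftTransversalIn (alternatingGroup (Fin 4))
          (alternatingGroup (Fin 4) ⊓
            MulAction.stabilizer (Equiv.Perm (Fin 4)) (0 : Fin 4)) S}) =>
      ∃ σ : Equiv.Perm (Fin 4) → Equiv.Perm (Fin 4),
        IsLeftIso (alternatingGroup (Fin 4) ⊓
          MulAction.stabilizer (Equiv.Perm (Fin 4)) (0 : Fin 4)) T.1 L.1 σ) = 7 ∧
    ∀ T L : Set (Equiv.Perm (Fin 4)),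
      IsLeftTransversalIn (alternatingGroup (Fin 4))
        (alternatingGroup (Fin 4) ⊓
          MulAction.stabilizer (Equiv.Perm (Fin 4)) (0 : Fin 4)) T →
      IsLeftTransversalIn (alternatingGroup (Fin 4))
        (alternatingGroup (Fin 4) ⊓
          MulAction.stabilizer (Equiv.Perm (Fin 4)) (0 : Fin 4)) L →
      ((∃ σ : Equiv.Perm (Fin 4) → Equiv.Perm (Fin 4),
          IsLeftIso (alternatingGroup (Fin 4) ⊓
            MulAction.stabilizer (Equiv.Perm (Fin 4)) (0 : Fin 4)) T L σ) ↔
        ∃ α : Equiv.Perm (Fin 4), α 0 = 0 ∧ (fun g => α * g * α⁻¹) '' T = L) := by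
  have := alternatingGroup.isPretransitive_of_three_le_card (Fin 4) (by simp)
  refine ⟨?_, fun T L hT hL => isLeftIso_iff_exists_conj hT hL⟩
  rw [← Alt4Section.card_quotient_conjSetoid]
  refine Nat.card_congr (Quot.congr
    ((Alt4Section.equivCosetSection).trans IsCosetSection.equivLeftTransversal) fun c d =>
      (Alt4Section.isCosetSection c).sectionConj_iff_isLeftIso (Alt4Section.isCosetSection d)).symm
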